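/- Let A, B ∈ M_n(ℂ) and define A₂(t) := exp(−itA/2) · ( (1/2)(exp(−itB) A exp(itB) − A) + exp(−itB)(exp(−itA/2) B exp(itA/2) − B) exp(itB) ) · exp(itA/2). Then for every t ∈ ℝ, A₂(t) = Σ_{q=0}^∞ Σ_{j=2}^∞ ((−it)^{q+j} / (2^q q! j!)) · ( ((1−j)/2) · ad_A^q(ad_B^j(A)) + Σ_{p=0}^∞ ((−it)^p / (2^j p!)) · ad_A^q(ad_B^p(ad_A^j(B))) ), where the series converges absolutely in M_n(ℂ). -/

import Mathlib

/-!
Hadamard's lemma `exp(zX) Y exp(-zX) = ∑ (z^m/m!) ad_X^m Y` holds in any Banach algebra because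
`ad_X = L_X - R_X` with commuting left and right multiplications, so
`exp(z ad_X) = exp(z L_X) exp(-z R_X)`. With `c = -it` it expands both conjugations in the middle
factor of `A₂(t)`; since `ad_A B = -ad_B A`, the `j = 1` terms of the two expansions cancel and the
middle factor becomes `∑_{j≥2} (c^j/j!) ((1-j)/2 ad_B^j A + 2^{-j} e^{cB} ad_A^j B e^{-cB})`.
Conjugating by `exp(cA/2)` and expanding once more gives the double series, and
`‖ad_X^m Y‖ ≤ (2‖X‖)^m ‖Y‖` makes every series absolutely convergent.
-/

open scoped Matrix.Norms.L2Operator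
open Matrix

namespace Stmt18

/-- `ad_X(Y) := [X,Y] = XY - YX`. -/
noncomputable def ad {n : ℕ} (X Y : Matrix (Fin n) (Fin n) ℂ) :
    Matrix (Fin n) (Fin n) ℂ :=
  X * Y - Y * X

/-- The exact error Hamiltonian of the second-order (Strang) splitting. -/
noncomputable def A2 {n : ℕ} (A B : Matrix (Fin n) (Fin n) ℂ) (t : ℝ) :
    Matrix (Fin n) (Fin n) ℂ :=
  NormedSpace.exp ((-(Complex.I * (t : ℂ) / 2)) • A) *
    ((1 / 2 : ℂ) •
        (NormedSpace.exp ((-(Complex.I * (t : ℂ))) • B) * A *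
            NormedSpace.exp ((Complex.I * (t : ℂ)) • B) - A) +
      NormedSpace.exp ((-(Complex.I * (t : ℂ))) • B) *
        (NormedSpace.exp ((-(Complex.I * (t : ℂ) / 2)) • A) * B *
            NormedSpace.exp ((Complex.I * (t : ℂ) / 2) • A) - B) *
        NormedSpace.exp ((Complex.I * (t : ℂ)) • B)) *
    NormedSpace.exp ((Complex.I * (t : ℂ) / 2) • A)

/-- The summand `((-it)^p / (2^j p!)) ad_A^q(ad_B^p(ad_A^j(B)))` of the innermost
series, with `j ≥ 2` encoded as `j = j' + 2`. -/
noncomputable def innerP {n : ℕ} (A B : Matrix (Fin n) (Fin n) ℂ) (t : ℝ)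
    (q j' p : ℕ) : Matrix (Fin n) (Fin n) ℂ :=
  ((-(Complex.I * (t : ℂ))) ^ p / ((2 : ℂ) ^ (j' + 2) * (p.factorial : ℂ))) •
    (ad A)^[q] ((ad B)^[p] ((ad A)^[j' + 2] B))

/-- The `(q, j)`-summand of the double series for `A₂(t)`, with `j ≥ 2` encoded as
`j = j' + 2`. -/
noncomputable def term {n : ℕ} (A B : Matrix (Fin n) (Fin n) ℂ) (t : ℝ)
    (q j' : ℕ) : Matrix (Fin n) (Fin n) ℂ :=
  ((-(Complex.I * (t : ℂ))) ^ (q + (j' + 2)) /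
      ((2 : ℂ) ^ q * (q.factorial : ℂ) * ((j' + 2).factorial : ℂ))) •
    (((1 - ((j' + 2 : ℕ) : ℂ)) / 2) • (ad A)^[q] ((ad B)^[j' + 2] A) +
      ∑' p : ℕ, innerP A B t q j' p)

open NormedSpace ContinuousLinearMap
open scoped Nat

section Series

variable {𝕂 E : Type*} [RCLike 𝕂] [NormedAddCommGroup E] [NormedSpace 𝕂 E]

lemma norm_pow_div_factorial_smul (z : 𝕂) (m : ℕ) (v : E) :
    ‖(z ^ m / m !) • v‖ = ‖z‖ ^ m / m ! * ‖v‖ := by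
  rw [norm_smul, norm_div, norm_pow, RCLike.norm_natCast]

lemma summable_norm_pow_div_factorial_smul (z : 𝕂) {v : ℕ → E} {C R : ℝ}
    (hv : ∀ m, ‖v m‖ ≤ C * R ^ m) : Summable fun m => ‖(z ^ m / m !) • v m‖ := by
  refine .of_nonneg_of_le (fun _ => norm_nonneg _) (fun m => ?_)
    ((Real.summable_pow_div_factorial (‖z‖ * R)).mul_left C)
  rw [norm_pow_div_factorial_smul, mul_pow]
  calc ‖z‖ ^ m / m ! * ‖v m‖ ≤ ‖z‖ ^ m / m ! * (C * R ^ m) := by gcongr; exact hv m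
    _ = C * (‖z‖ ^ m * R ^ m / m !) := by ring

lemma norm_one_sub_div_two_le (m : ℕ) : ‖(1 - (m : 𝕂)) / 2‖ ≤ 2 ^ m := by
  have hm : (m : ℝ) + 1 ≤ 2 ^ m := by exact_mod_cast Nat.lt_two_pow_self
  have hsub : ‖1 - (m : 𝕂)‖ ≤ 1 + m := by simpa using norm_sub_le (1 : 𝕂) m
  rw [norm_div, RCLike.norm_ofNat, div_le_iff₀ two_pos]
  linarith [pow_pos (two_pos (α := ℝ)) m]

lemma one_sub_div_two_mul_pow_div_factorial (c : 𝕂) (m : ℕ) :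
    1 / 2 * (c ^ (m + 1) / (m + 1)!) - c / 2 * (c ^ m / m !) =
      c ^ (m + 1) / (m + 1)! * ((1 - ((m + 1 : ℕ) : 𝕂)) / 2) := by
  rw [Nat.factorial_succ]
  push_cast
  field_simp
  ring

-- The coefficient `(c^m/m!) (1-m)/2` of `½ (c^m/m!) aₘ - (c/2) (c^(m-1)/(m-1)!) aₘ` vanishes at
-- `m = 1`, so the combined series starts at `m = 2`.
lemma hasSum_one_sub_div_two_smul (c : 𝕂) {a : ℕ → E} {S S' : E}
    (hS : HasSum (fun m => (c ^ m / m !) • a m) S)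
    (hS' : HasSum (fun m => (c ^ m / m !) • a (m + 1)) S') :
    HasSum (fun j => (c ^ (j + 2) / (j + 2)! * ((1 - ((j + 2 : ℕ) : 𝕂)) / 2)) • a (j + 2))
      ((1 / 2 : 𝕂) • (S - a 0) - (c / 2) • S') := by
  have hS₁ : HasSum (fun m => (c ^ (m + 1) / (m + 1)!) • a (m + 1)) (S - a 0) := by
    simpa using (hasSum_nat_add_iff' 1).2 hS
  have hcomb := (hS₁.const_smul (1 / 2 : 𝕂)).sub (hS'.const_smul (c / 2))
  simp only [smul_smul, ← sub_smul, one_sub_div_two_mul_pow_div_factorial] at hcomb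
  convert (hasSum_nat_add_iff' 1).2 hcomb using 1
  simp

end Series

section Hadamard

variable {𝕂 𝔸 : Type*} [RCLike 𝕂] [NormedRing 𝔸] [NormedAlgebra 𝕂 𝔸]

variable (𝕂) in
noncomputable def adL (X : 𝔸) : 𝔸 →L[𝕂] 𝔸 :=
  mul 𝕂 𝔸 X - (mul 𝕂 𝔸).flip X

@[simp]
lemma adL_apply (X Y : 𝔸) : adL 𝕂 X Y = X * Y - Y * X := rfl

lemma adL_smul (z : 𝕂) (X : 𝔸) : adL 𝕂 (z • X) = z • adL 𝕂 X := by
  ext Y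
  simp [smul_sub]

lemma norm_adL_pow_apply_le (X Y : 𝔸) (m : ℕ) :
    ‖(adL 𝕂 X ^ m) Y‖ ≤ (2 * ‖X‖) ^ m * ‖Y‖ := by
  induction m with
  | zero => simp
  | succ m ih =>
    rw [pow_succ', mul_apply_eq_comp, adL_apply]
    calc ‖X * (adL 𝕂 X ^ m) Y - (adL 𝕂 X ^ m) Y * X‖
        ≤ 2 * ‖X‖ * ‖(adL 𝕂 X ^ m) Y‖ := by
          grw [norm_sub_le, norm_mul_le, norm_mul_le]
          linarith
      _ ≤ 2 * ‖X‖ * ((2 * ‖X‖) ^ m * ‖Y‖) := by gcongr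
      _ = (2 * ‖X‖) ^ (m + 1) * ‖Y‖ := by ring

lemma norm_pow_div_factorial_smul_adL_pow_apply_le (z : 𝕂) (X Y : 𝔸) (m : ℕ) :
    ‖(z ^ m / m !) • (adL 𝕂 X ^ m) Y‖ ≤ (‖z‖ * (2 * ‖X‖)) ^ m / m ! * ‖Y‖ := by
  rw [norm_pow_div_factorial_smul]
  grw [norm_adL_pow_apply_le]
  exact le_of_eq (by ring)

variable [CompleteSpace 𝔸]

lemma hasSum_exp_apply {E : Type*} [NormedAddCommGroup E] [NormedSpace 𝕂 E] [CompleteSpace E]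
    (f : E →L[𝕂] E) (Y : E) :
    HasSum (fun m => (m !⁻¹ : 𝕂) • (f ^ m) Y) (exp f Y) :=
  (exp_series_hasSum_exp' (𝕂 := 𝕂) f).mapL (apply 𝕂 E Y)

lemma exp_mul_apply (X Y : 𝔸) : exp (mul 𝕂 𝔸 X) Y = exp X * Y := by
  have hpow (m : ℕ) : (mul 𝕂 𝔸 X ^ m) Y = X ^ m * Y := by
    induction m with
    | zero => simp
    | succ m ih => rw [pow_succ', mul_apply_eq_comp, ih, mul_apply', pow_succ', mul_assoc]
  refine (hasSum_exp_apply (mul 𝕂 𝔸 X) Y).unique ?_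
  simpa only [hpow, smul_mul_assoc] using (exp_series_hasSum_exp' (𝕂 := 𝕂) X).mul_right Y

lemma exp_mul_flip_apply (X Y : 𝔸) : exp ((mul 𝕂 𝔸).flip X) Y = Y * exp X := by
  have hpow (m : ℕ) : ((mul 𝕂 𝔸).flip X ^ m) Y = Y * X ^ m := by
    induction m with
    | zero => simp
    | succ m ih =>
      rw [pow_succ', mul_apply_eq_comp, ih, flip_apply, mul_apply', pow_succ, mul_assoc]
  refine (hasSum_exp_apply ((mul 𝕂 𝔸).flip X) Y).unique ?_
  simpa only [hpow, mul_smul_comm] using (exp_series_hasSum_exp' (𝕂 := 𝕂) X).mul_left Y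

lemma exp_adL_apply (X Y : 𝔸) : exp (adL 𝕂 X) Y = exp X * Y * exp (-X) := by
  have hsplit : adL 𝕂 X = mul 𝕂 𝔸 X + (mul 𝕂 𝔸).flip (-X) := by
    ext Z
    simp [sub_eq_add_neg]
  have hcomm : Commute (mul 𝕂 𝔸 X) ((mul 𝕂 𝔸).flip (-X)) := by
    ext Z
    simp [mul_assoc]
  rw [hsplit, exp_add_of_commute_of_mem_ball (𝕂 := 𝕂) hcomm, mul_apply_eq_comp,
    exp_mul_flip_apply, exp_mul_apply, mul_assoc]
  all_goals simp [expSeries_radius_eq_top]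

lemma hasSum_exp_conj (z : 𝕂) (X Y : 𝔸) :
    HasSum (fun m => (z ^ m / m !) • (adL 𝕂 X ^ m) Y) (exp (z • X) * Y * exp (-(z • X))) := by
  rw [← exp_adL_apply (𝕂 := 𝕂), adL_smul]
  simpa only [smul_pow, _root_.smul_apply, smul_smul, div_eq_inv_mul]
    using hasSum_exp_apply (z • adL 𝕂 X) Y

end Hadamard

section StrangMiddle

variable {𝕂 𝔸 : Type*} [RCLike 𝕂] [NormedRing 𝔸] [NormedAlgebra 𝕂 𝔸]

noncomputable def strangMiddle (c : 𝕂) (A B : 𝔸) : 𝔸 :=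
  (1 / 2 : 𝕂) • (exp (c • B) * A * exp (-(c • B)) - A) +
    exp (c • B) * (exp ((c / 2) • A) * B * exp (-((c / 2) • A)) - B) * exp (-(c • B))

noncomputable def strangMiddleCoeff (c : 𝕂) (A B : 𝔸) (m : ℕ) : 𝔸 :=
  ((1 - (m : 𝕂)) / 2) • (adL 𝕂 B ^ m) A +
    ((2 : 𝕂) ^ m)⁻¹ • (exp (c • B) * (adL 𝕂 A ^ m) B * exp (-(c • B)))

lemma summable_norm_strangMiddle (c : 𝕂) (A B : 𝔸) :
    Summable fun j => ‖(c ^ (j + 2) / (j + 2)!) • strangMiddleCoeff c A B (j + 2)‖ := by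
  suffices h : Summable fun m => ‖(c ^ m / m !) • strangMiddleCoeff c A B m‖ from
    (summable_nat_add_iff 2).2 h
  refine .of_nonneg_of_le (fun _ => norm_nonneg _) (fun m => ?_)
    ((summable_norm_pow_div_factorial_smul c (C := ‖A‖) (R := 2 * (2 * ‖B‖))
      (v := fun m => ((1 - (m : 𝕂)) / 2) • (adL 𝕂 B ^ m) A) fun m => ?_).add
    (summable_norm_pow_div_factorial_smul c (C := ‖exp (c • B)‖ * ‖B‖ * ‖exp (-(c • B))‖)
      (R := ‖A‖) (v := fun m => ((2 : 𝕂) ^ m)⁻¹ •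
        (exp (c • B) * (adL 𝕂 A ^ m) B * exp (-(c • B)))) fun m => ?_))
  · rw [strangMiddleCoeff, smul_add]
    exact norm_add_le _ _
  · calc ‖((1 - (m : 𝕂)) / 2) • (adL 𝕂 B ^ m) A‖
        ≤ 2 ^ m * ((2 * ‖B‖) ^ m * ‖A‖) := by
          rw [norm_smul]
          gcongr
          · exact norm_one_sub_div_two_le m
          · exact norm_adL_pow_apply_le B A m
      _ = ‖A‖ * (2 * (2 * ‖B‖)) ^ m := by rw [mul_pow, mul_pow]; ring
  · calc ‖((2 : 𝕂) ^ m)⁻¹ • (exp (c • B) * (adL 𝕂 A ^ m) B * exp (-(c • B)))‖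
        ≤ (2 ^ m)⁻¹ * (‖exp (c • B)‖ * ((2 * ‖A‖) ^ m * ‖B‖) * ‖exp (-(c • B))‖) := by
          rw [norm_smul, norm_inv, norm_pow, RCLike.norm_ofNat]
          gcongr
          refine norm_mul₃_le.trans ?_
          gcongr
          exact norm_adL_pow_apply_le A B m
      _ = ‖exp (c • B)‖ * ‖B‖ * ‖exp (-(c • B))‖ * ‖A‖ ^ m := by
          rw [mul_pow]
          field_simp

variable [CompleteSpace 𝔸]

lemma hasSum_strangMiddle (c : 𝕂) (A B : 𝔸) :
    HasSum (fun j => (c ^ (j + 2) / (j + 2)!) • strangMiddleCoeff c A B (j + 2))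
      (strangMiddle c A B) := by
  let conj := mulLeftRight 𝕂 𝔸 (exp (c • B)) (exp (-(c • B)))
  have hBA : HasSum (fun m => (c ^ m / m !) • (adL 𝕂 B ^ (m + 1)) A) (conj (adL 𝕂 B A)) := by
    simpa only [pow_succ, mul_apply_eq_comp, conj, mulLeftRight_apply]
      using hasSum_exp_conj c B (adL 𝕂 B A)
  have hA := hasSum_one_sub_div_two_smul c (hasSum_exp_conj c B A) hBA
  have hB := ((hasSum_nat_add_iff' 2).2 (hasSum_exp_conj (c / 2) A B)).mapL conj
  have hsum : (1 / 2 : 𝕂) • (exp (c • B) * A * exp (-(c • B)) - (adL 𝕂 B ^ 0) A) -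
      (c / 2) • conj (adL 𝕂 B A) + conj (exp ((c / 2) • A) * B * exp (-((c / 2) • A)) -
        ∑ i ∈ Finset.range 2, ((c / 2) ^ i / i !) • (adL 𝕂 A ^ i) B) = strangMiddle c A B := by
    have hskew : adL 𝕂 A B = -adL 𝕂 B A := by simp
    have hfirst : ∑ i ∈ Finset.range 2, ((c / 2) ^ i / i !) • (adL 𝕂 A ^ i) B =
        B + (c / 2) • adL 𝕂 A B := by
      simp [Finset.sum_range_succ]
    rw [hfirst, hskew, ← sub_sub, map_sub, map_smul, map_neg, pow_zero, one_apply_eq_self]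
    simp only [conj, mulLeftRight_apply, strangMiddle]
    module
  rw [← hsum]
  refine (hA.add hB).congr_fun fun j => ?_
  simp only [strangMiddleCoeff, map_smul, smul_add, smul_smul, div_pow]
  congr 2
  ring

end StrangMiddle

section StrangSeries

variable {n : ℕ}

lemma iterate_ad (X : Matrix (Fin n) (Fin n) ℂ) (m : ℕ) : (ad X)^[m] = ⇑(adL ℂ X ^ m) := by
  rw [FunLike.coe_pow_eq_iterate]
  rfl

lemma A2_eq (A B : Matrix (Fin n) (Fin n) ℂ) (t : ℝ) :
    A2 A B t = exp ((-(Complex.I * t) / 2) • A) * strangMiddle (-(Complex.I * t)) A B *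
      exp (-((-(Complex.I * t) / 2) • A)) := by
  simp only [A2, strangMiddle, neg_div, neg_smul, neg_neg]

lemma innerP_eq (A B : Matrix (Fin n) (Fin n) ℂ) (t : ℝ) (q j' p : ℕ) :
    innerP A B t q j' p = ((-(Complex.I * t)) ^ p / p !) •
      (((2 : ℂ) ^ (j' + 2))⁻¹ • (adL ℂ A ^ q) ((adL ℂ B ^ p) ((adL ℂ A ^ (j' + 2)) B))) := by
  simp only [innerP, iterate_ad, smul_smul]
  congr 1
  field_simp

lemma hasSum_innerP (A B : Matrix (Fin n) (Fin n) ℂ) (t : ℝ) (q j' : ℕ) :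
    HasSum (innerP A B t q j') (((2 : ℂ) ^ (j' + 2))⁻¹ • (adL ℂ A ^ q)
      (exp ((-(Complex.I * t)) • B) * (adL ℂ A ^ (j' + 2)) B *
        exp (-((-(Complex.I * t)) • B)))) := by
  refine (((hasSum_exp_conj (-(Complex.I * t)) B ((adL ℂ A ^ (j' + 2)) B)).mapL
    (adL ℂ A ^ q)).const_smul ((2 : ℂ) ^ (j' + 2))⁻¹).congr_fun fun p => ?_
  rw [innerP_eq, map_smul, smul_comm]

lemma summable_norm_innerP (A B : Matrix (Fin n) (Fin n) ℂ) (t : ℝ) (q j' : ℕ) :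
    Summable fun p => ‖innerP A B t q j' p‖ := by
  set Y := (adL ℂ A ^ (j' + 2)) B
  simp only [innerP_eq]
  refine summable_norm_pow_div_factorial_smul _
    (C := ‖((2 : ℂ) ^ (j' + 2))⁻¹‖ * (2 * ‖A‖) ^ q * ‖Y‖) (R := 2 * ‖B‖) fun p => ?_
  calc ‖((2 : ℂ) ^ (j' + 2))⁻¹ • (adL ℂ A ^ q) ((adL ℂ B ^ p) Y)‖
      ≤ ‖((2 : ℂ) ^ (j' + 2))⁻¹‖ * ((2 * ‖A‖) ^ q * ((2 * ‖B‖) ^ p * ‖Y‖)) := by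
        rw [norm_smul]
        grw [norm_adL_pow_apply_le, norm_adL_pow_apply_le]
    _ = _ := by ring

lemma term_eq (A B : Matrix (Fin n) (Fin n) ℂ) (t : ℝ) (q j' : ℕ) :
    term A B t q j' = ((-(Complex.I * t) / 2) ^ q / q !) • (adL ℂ A ^ q)
      (((-(Complex.I * t)) ^ (j' + 2) / (j' + 2)!) •
        strangMiddleCoeff (-(Complex.I * t)) A B (j' + 2)) := by
  rw [term, (hasSum_innerP A B t q j').tsum_eq, strangMiddleCoeff]
  simp only [iterate_ad, map_smul, map_add, smul_add, smul_smul]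
  congr 2 <;> rw [div_pow, pow_add] <;> ring

end StrangSeries

/-- the fully expanded, absolutely convergent series for `A₂(t)`. -/
theorem stmt18 {n : ℕ} (A B : Matrix (Fin n) (Fin n) ℂ) :
    ∀ t : ℝ,
      (∀ q j', Summable fun p : ℕ => ‖innerP A B t q j' p‖) ∧
      (Summable fun qj : ℕ × ℕ => ‖term A B t qj.1 qj.2‖) ∧
      A2 A B t = ∑' (q : ℕ) (j' : ℕ), term A B t q j' := by
  intro t
  refine ⟨summable_norm_innerP A B t, ?_, ?_⟩
  · refine .of_nonneg_of_le (fun _ => norm_nonneg _) (fun qj => ?_)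
      ((Real.summable_pow_div_factorial (‖-(Complex.I * t) / 2‖ * (2 * ‖A‖))).mul_of_nonneg
        (summable_norm_strangMiddle (-(Complex.I * t)) A B) (fun _ => by positivity)
        (fun _ => norm_nonneg _))
    rw [term_eq]
    exact norm_pow_div_factorial_smul_adL_pow_apply_le _ _ _ _
  · rw [A2_eq, ← (hasSum_exp_conj _ A _).tsum_eq]
    refine tsum_congr fun q => ?_
    rw [← (((hasSum_strangMiddle (-(Complex.I * t)) A B).mapL (adL ℂ A ^ q)).const_smul
      ((-(Complex.I * t) / 2) ^ q / q ! : ℂ)).tsum_eq]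
    exact tsum_congr fun j' => (term_eq A B t q j').symm

end Stmt18
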